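/- arXiv:1407.6475 — 3 statements merged into one kernel-verified Lean document; each statement's English description precedes it below -/
import Mathlib

section
/- Let A ∈ {0,1}^{m×d}. Then A is completely mixable if and only if m divides Σ_{1≤i≤m, 1≤j≤d} A_{ij}. -/
open Finset

/-- The row sum of an integer matrix. -/
def rowSum {m d : ℕ} (A : Matrix (Fin m) (Fin d) ℤ) (i : Fin m) : ℤ :=
  ∑ j, A i j

/-- `colPermute A P` is the matrix `A^Π`: column `j` of `A` permuted by `P j`,
i.e. `(A^Π)_{i,j} = A_{(P j)⁻¹ i, j}`. -/
def colPermute {m d : ℕ} (A : Matrix (Fin m) (Fin d) ℤ)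
    (P : Fin d → Equiv.Perm (Fin m)) : Matrix (Fin m) (Fin d) ℤ :=
  fun i j => A ((P j)⁻¹ i) j

/-- `gamma A` = min over all tuples of column permutations of the maximal row sum. -/
def gamma {m d : ℕ} [NeZero m] (A : Matrix (Fin m) (Fin d) ℤ) : ℤ :=
  Finset.univ.inf' Finset.univ_nonempty fun P : Fin d → Equiv.Perm (Fin m) =>
    Finset.univ.sup' Finset.univ_nonempty fun i => rowSum (colPermute A P) i

/-- `beta A` = max over all tuples of column permutations of the minimal row sum. -/
def beta {m d : ℕ} [NeZero m] (A : Matrix (Fin m) (Fin d) ℤ) : ℤ :=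
  Finset.univ.sup' Finset.univ_nonempty fun P : Fin d → Equiv.Perm (Fin m) =>
    Finset.univ.inf' Finset.univ_nonempty fun i => rowSum (colPermute A P) i

/- ### Auxiliary lemmas -/

lemma sum_boole_col {m : ℕ} (f : Fin m → ℤ) (hf : ∀ i, f i = 0 ∨ f i = 1) :
    ∑ i, f i = ((Finset.univ.filter fun i => f i = 1).card : ℤ) := by
  classical
  rw [← Finset.sum_boole]
  exact Finset.sum_congr rfl fun i _ => by rcases hf i with h | h <;> simp [h]

lemma exists_perm_of_col {m : ℕ} (a b : Fin m → ℤ) (ha : ∀ i, a i = 0 ∨ a i = 1)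
    (hb : ∀ i, b i = 0 ∨ b i = 1) (hs : ∑ i, a i = ∑ i, b i) :
    ∃ σ : Equiv.Perm (Fin m), ∀ i, b i = a (σ⁻¹ i) := by
  classical
  have hcard : (univ.filter fun i => a i = 1).card = (univ.filter fun i => b i = 1).card := by
    have := (sum_boole_col a ha).symm.trans (hs.trans (sum_boole_col b hb))
    exact_mod_cast this
  have h1 : Fintype.card {i // a i = 1} = Fintype.card {i // b i = 1} := by
    simpa [Fintype.card_subtype] using hcard
  have h2 : Fintype.card {i // ¬ a i = 1} = Fintype.card {i // ¬ b i = 1} := by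
    rw [Fintype.card_subtype_compl, Fintype.card_subtype_compl, h1]
  obtain ⟨e⟩ := Fintype.card_eq.mp h1
  obtain ⟨f⟩ := Fintype.card_eq.mp h2
  refine ⟨Equiv.subtypeCongr e f, fun i => ?_⟩
  have key : ∀ i, b (Equiv.subtypeCongr e f i) = a i := by
    intro i
    by_cases h : a i = 1
    · have : Equiv.subtypeCongr e f i = (e ⟨i, h⟩ : Fin m) := by
        simp [Equiv.subtypeCongr, h]
      rw [this, (e ⟨i, h⟩).2, h]
    · have : Equiv.subtypeCongr e f i = (f ⟨i, h⟩ : Fin m) := by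
        simp [Equiv.subtypeCongr, h]
      rw [this]
      rcases hb (f ⟨i, h⟩) with h' | h'
      · rw [h']; rcases ha i with h'' | h'' <;> simp [h''] at h ⊢
      · exact absurd h' (f ⟨i, h⟩).2
  have := key ((Equiv.subtypeCongr e f)⁻¹ i)
  simp at this; exact this

lemma same_mod_eq {m c k x y : ℕ} (hk : k ≤ m) (hx : x ∈ Finset.Ico c (c+k))
    (hy : y ∈ Finset.Ico c (c+k)) (h : x % m = y % m) : x = y := by
  simp only [Finset.mem_Ico] at hx hy
  have key : ∀ u v : ℕ, u ≤ v → c ≤ u → v < c + k → u % m = v % m → u = v := by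
    intro u v huv hcu hv hmod
    obtain ⟨t, ht⟩ := (Nat.modEq_iff_dvd' huv).mp hmod
    rcases Nat.eq_zero_or_pos t with h0 | h0
    · subst h0; omega
    · have h1 : m * 1 ≤ m * t := Nat.mul_le_mul_left m h0
      omega
  rcases le_total x y with hle | hle
  · exact key x y hle hx.1 hy.2 h
  · exact (key y x hle hy.1 hx.2 h.symm).symm

lemma count_range_mul {m q i : ℕ} (hm : 0 < m) (hi : i < m) :
    ((Finset.range (m*q)).filter (fun t => t % m = i)).card = q := by
  have himg : (Finset.range (m*q)).filter (fun t => t % m = i)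
      = (Finset.range q).image (fun s => m * s + i) := by
    ext t
    simp only [Finset.mem_filter, Finset.mem_range, Finset.mem_image]
    constructor
    · rintro ⟨hlt, hmod⟩
      refine ⟨t / m, ?_, ?_⟩
      · exact (Nat.div_lt_iff_lt_mul hm).mpr (by rw [Nat.mul_comm]; exact hlt)
      · have := Nat.div_add_mod t m; omega
    · rintro ⟨s, hs, rfl⟩
      constructor
      · have h1 : m * (s + 1) ≤ m * q := Nat.mul_le_mul_left m hs
        rw [Nat.mul_succ] at h1
        omega
      · rw [Nat.add_comm, Nat.add_mul_mod_self_left]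
        exact Nat.mod_eq_of_lt hi
  rw [himg, Finset.card_image_of_injective _ (fun s1 s2 h => by
    have h2 : m * s1 = m * s2 := by omega
    exact Nat.eq_of_mul_eq_mul_left hm h2), Finset.card_range]

lemma filter_range_split {a b : ℕ} (h : a ≤ b) (p : ℕ → Prop) [DecidablePred p] :
    ((Finset.range a).filter p).card + ((Finset.Ico a b).filter p).card
      = ((Finset.range b).filter p).card := by
  rw [Finset.range_eq_Ico, Finset.range_eq_Ico,
    ← Finset.Ico_union_Ico_eq_Ico (Nat.zero_le a) h, Finset.filter_union,
    Finset.card_union_of_disjoint]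
  exact Finset.disjoint_filter_filter (Finset.Ico_disjoint_Ico_consecutive 0 a b)

lemma sum_rowSum {m d : ℕ} (A : Matrix (Fin m) (Fin d) ℤ)
    (P : Fin d → Equiv.Perm (Fin m)) :
    ∑ i, rowSum (colPermute A P) i = ∑ i, ∑ j, A i j := by
  unfold rowSum colPermute
  rw [Finset.sum_comm]
  conv_rhs => rw [Finset.sum_comm (f := fun (i : Fin m) (j : Fin d) => A i j)]
  exact Finset.sum_congr rfl fun j _ => Equiv.sum_comp (P j)⁻¹ (fun i => A i j)

lemma mul_inf'_le {m d : ℕ} [NeZero m] (A : Matrix (Fin m) (Fin d) ℤ)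
    (P : Fin d → Equiv.Perm (Fin m)) :
    (m : ℤ) * (Finset.univ.inf' Finset.univ_nonempty
      fun i => rowSum (colPermute A P) i) ≤ ∑ i, ∑ j, A i j := by
  rw [← sum_rowSum A P]
  calc (m : ℤ) * _ = ∑ _i : Fin m, (Finset.univ.inf' Finset.univ_nonempty
        fun i => rowSum (colPermute A P) i) := by
        rw [Finset.sum_const, Finset.card_univ, Fintype.card_fin, nsmul_eq_mul]
    _ ≤ ∑ i, rowSum (colPermute A P) i :=
        Finset.sum_le_sum fun i _ => Finset.inf'_le _ (Finset.mem_univ i)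

lemma le_mul_sup' {m d : ℕ} [NeZero m] (A : Matrix (Fin m) (Fin d) ℤ)
    (P : Fin d → Equiv.Perm (Fin m)) :
    ∑ i, ∑ j, A i j ≤ (m : ℤ) * (Finset.univ.sup' Finset.univ_nonempty
      fun i => rowSum (colPermute A P) i) := by
  rw [← sum_rowSum A P]
  calc ∑ i, rowSum (colPermute A P) i
      ≤ ∑ _i : Fin m, (Finset.univ.sup' Finset.univ_nonempty
        fun i => rowSum (colPermute A P) i) :=
        Finset.sum_le_sum fun i _ => Finset.le_sup' _ (Finset.mem_univ i)
    _ = (m : ℤ) * _ := by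
        rw [Finset.sum_const, Finset.card_univ, Fintype.card_fin, nsmul_eq_mul]

lemma mul_beta_le {m d : ℕ} [NeZero m] (A : Matrix (Fin m) (Fin d) ℤ) :
    (m : ℤ) * beta A ≤ ∑ i, ∑ j, A i j := by
  obtain ⟨P0, _, hP0⟩ := Finset.exists_mem_eq_sup' (Finset.univ_nonempty
    (α := Fin d → Equiv.Perm (Fin m)))
    (fun P => Finset.univ.inf' Finset.univ_nonempty fun i => rowSum (colPermute A P) i)
  rw [beta, hP0]
  exact mul_inf'_le A P0

lemma le_mul_gamma {m d : ℕ} [NeZero m] (A : Matrix (Fin m) (Fin d) ℤ) :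
    ∑ i, ∑ j, A i j ≤ (m : ℤ) * gamma A := by
  obtain ⟨P0, _, hP0⟩ := Finset.exists_mem_eq_inf' (Finset.univ_nonempty
    (α := Fin d → Equiv.Perm (Fin m)))
    (fun P => Finset.univ.sup' Finset.univ_nonempty fun i => rowSum (colPermute A P) i)
  rw [gamma, hP0]
  exact le_mul_sup' A P0

/-- A 0/1-matrix `A ∈ {0,1}^{m×d}` is completely mixable if and only
if `m` divides the sum of all its entries. -/
theorem zeroOne_completelyMixable_iff_dvd {m d : ℕ} [NeZero m]
    (A : Matrix (Fin m) (Fin d) ℤ) (hA : ∀ i j, A i j = 0 ∨ A i j = 1) :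
    gamma A = beta A ↔ (m : ℤ) ∣ ∑ i, ∑ j, A i j := by
  classical
  have hm : 0 < m := Nat.pos_of_ne_zero (NeZero.ne m)
  have hbg := mul_beta_le A
  have hgg := le_mul_gamma A
  constructor
  · intro h
    rw [h] at hgg
    exact ⟨beta A, le_antisymm hgg hbg⟩
  · intro hdvd
    -- set up the construction
    set k : Fin d → ℕ := fun j => (Finset.univ.filter fun i => A i j = 1).card with hk
    have hkm : ∀ j, k j ≤ m := fun j => le_trans (Finset.card_filter_le _ _) (by simp)
    have hcolsum : ∀ j, ∑ i, A i j = (k j : ℤ) :=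
      fun j => sum_boole_col (fun i => A i j) (fun i => hA i j)
    set k' : ℕ → ℕ := fun n => if h : n < d then k ⟨n, h⟩ else 0 with hk'
    set c' : ℕ → ℕ := fun n => ∑ t ∈ Finset.range n, k' t with hc'
    have hc'succ : ∀ n, c' (n+1) = c' n + k' n := fun n => Finset.sum_range_succ k' n
    set Sn : ℕ := ∑ j, k j with hSn
    have hS : ∑ i, ∑ j, A i j = (Sn : ℤ) := by
      rw [Finset.sum_comm (f := fun (i : Fin m) (j : Fin d) => A i j)]
      rw [Finset.sum_congr rfl fun j _ => hcolsum j]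
      push_cast [hSn]
      rfl
    have hc'd : c' d = Sn := by
      show ∑ t ∈ Finset.range d, k' t = Sn
      rw [hSn, ← Fin.sum_univ_eq_sum_range]
      exact Finset.sum_congr rfl fun j _ => by simp [hk', j.isLt]
    have hdvdn : m ∣ Sn := by
      rw [hS] at hdvd
      exact_mod_cast hdvd
    obtain ⟨q, hq⟩ := hdvdn
    -- target sets
    set T : Fin d → Finset (Fin m) := fun j =>
      (Finset.Ico (c' j.val) (c' j.val + k j)).image
        (fun t => (⟨t % m, Nat.mod_lt t hm⟩ : Fin m)) with hT
    set b : Fin d → Fin m → ℤ := fun j i => if i ∈ T j then 1 else 0 with hb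
    have hb01 : ∀ j i, b j i = 0 ∨ b j i = 1 := by
      intro j i; rw [hb]; dsimp only; split <;> simp
    have hTcard : ∀ j, (T j).card = k j := by
      intro j
      rw [hT]
      dsimp only
      rw [Finset.card_image_of_injOn, Nat.card_Ico]
      · omega
      · intro x hx y hy hxy
        exact same_mod_eq (hkm j) hx hy (congrArg Fin.val hxy)
    have hbsum : ∀ j, ∑ i, A i j = ∑ i, b j i := by
      intro j
      rw [hcolsum j, sum_boole_col (b j) (hb01 j)]
      congr 1
      rw [← hTcard j]
      congr 1
      ext i
      simp [hb]
    have hP : ∀ j, ∃ σ : Equiv.Perm (Fin m), ∀ i, b j i = A (σ⁻¹ i) j :=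
      fun j => exists_perm_of_col (fun i => A i j) (b j) (fun i => hA i j) (hb01 j) (hbsum j)
    choose P hPspec using hP
    -- every row sum of the permuted matrix equals q
    have hrow : ∀ i, rowSum (colPermute A P) i = (q : ℤ) := by
      intro i
      have him : i.val < m := i.isLt
      set f : ℕ → ℤ := fun n =>
        (((Finset.range n).filter (fun t => t % m = i.val)).card : ℤ) with hf
      have hstep : ∀ j : Fin d, b j i = f (c' (j.val + 1)) - f (c' j.val) := by
        intro j
        have hsplit := filter_range_split (Nat.le_add_right (c' j.val) (k j))
          (fun t => t % m = i.val)
        have hco : c' (j.val + 1) = c' j.val + k j := by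
          rw [hc'succ]; congr 1; simp [hk', j.isLt]
        set g : ℕ := ((Finset.Ico (c' j.val) (c' j.val + k j)).filter
          (fun t => t % m = i.val)).card with hg
        have hfe : f (c' (j.val + 1)) = f (c' j.val) + (g : ℤ) := by
          rw [hco, hf]
          push_cast [← hsplit]
          ring
        rw [hfe]
        have hbg' : b j i = (g : ℤ) := by
          rw [hb]
          dsimp only
          by_cases hmem : i ∈ T j
          · rw [if_pos hmem]
            rw [hT] at hmem
            simp only [Finset.mem_image] at hmem
            obtain ⟨t, ht, hti⟩ := hmem
            have htf : t ∈ (Finset.Ico (c' j.val) (c' j.val + k j)).filter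
                (fun t => t % m = i.val) := by
              rw [Finset.mem_filter]
              exact ⟨ht, congrArg Fin.val hti⟩
            have h1 : 1 ≤ g := Finset.card_pos.mpr ⟨t, htf⟩
            have h2 : g ≤ 1 := by
              rw [hg]
              apply Finset.card_le_one.mpr
              intro x hx y hy
              rw [Finset.mem_filter] at hx hy
              exact same_mod_eq (hkm j) hx.1 hy.1 (hx.2.trans hy.2.symm)
            have : g = 1 := le_antisymm h2 h1
            rw [this]; norm_num
          · rw [if_neg hmem]
            have : g = 0 := by
              rw [hg, Finset.card_eq_zero]
              by_contra hne
              obtain ⟨t, ht⟩ := Finset.nonempty_of_ne_empty hne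
              rw [Finset.mem_filter] at ht
              exact hmem (by
                rw [hT]
                exact Finset.mem_image.mpr ⟨t, ht.1, Fin.ext ht.2⟩)
            rw [this]; norm_num
        rw [hbg']
        ring
      have hcol : ∀ j : Fin d, A ((P j)⁻¹ i) j = b j i := fun j => (hPspec j i).symm
      calc rowSum (colPermute A P) i = ∑ j, b j i :=
            Finset.sum_congr rfl fun j _ => hcol j
        _ = ∑ j : Fin d, (f (c' (j.val + 1)) - f (c' j.val)) :=
            Finset.sum_congr rfl fun j _ => hstep j
        _ = ∑ n ∈ Finset.range d, (f (c' (n + 1)) - f (c' n)) :=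
            Fin.sum_univ_eq_sum_range (fun n => f (c' (n + 1)) - f (c' n)) d
        _ = f (c' d) - f (c' 0) := Finset.sum_range_sub (fun n => f (c' n)) d
        _ = (q : ℤ) := by
            have h0 : c' 0 = 0 := by simp [hc']
            rw [h0, hc'd, hf]
            simp only
            rw [hq, count_range_mul hm him]
            simp
    -- conclude
    have hsup : (Finset.univ.sup' Finset.univ_nonempty
        fun i => rowSum (colPermute A P) i) = (q : ℤ) := by
      apply le_antisymm
      · exact Finset.sup'_le _ _ fun i _ => (hrow i).le
      · exact (hrow ⟨0, hm⟩) ▸ Finset.le_sup' _ (Finset.mem_univ (⟨0, hm⟩ : Fin m))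
    have hinf : (Finset.univ.inf' Finset.univ_nonempty
        fun i => rowSum (colPermute A P) i) = (q : ℤ) := by
      apply le_antisymm
      · exact (hrow ⟨0, hm⟩) ▸ Finset.inf'_le _ (Finset.mem_univ (⟨0, hm⟩ : Fin m))
      · exact Finset.le_inf' _ _ fun i _ => (hrow i).ge
    have hgq : gamma A ≤ (q : ℤ) := by
      rw [gamma, ← hsup]
      exact Finset.inf'_le _ (Finset.mem_univ P)
    have hqb : (q : ℤ) ≤ beta A := by
      rw [beta, ← hinf]
      exact Finset.le_sup' (f := fun P => Finset.univ.inf' Finset.univ_nonempty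
        fun i => rowSum (colPermute A P) i) (Finset.mem_univ P)
    have hbga : beta A ≤ gamma A := by
      have : (m : ℤ) * beta A ≤ (m : ℤ) * gamma A := le_trans hbg hgg
      exact le_of_mul_le_mul_left this (by exact_mod_cast hm)
    linarith
end

section
/- Let d ≥ 1 and k ≥ 1 be integers, N = d^k, and let A ∈ ℤ^{N×d} be the matrix all of whose columns equal (1, 2, …, N)ᵀ. Then A is completely mixable and γ(A) = β(A) = d + Σ_{i=0}^{d−1} Σ_{j=1}^{k} i·d^{j−1}. -/
/-- For `d ≥ 1`, `k ≥ 1` and `N = d^k`, the `(N,d)`-matrix all of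
whose columns equal `(1,…,N)ᵀ` is completely mixable with
`γ(A) = β(A) = d + Σ_{i=0}^{d-1} Σ_{j=1}^{k} i·d^{j-1}`. -/
theorem consecutiveIntegers_completelyMixable_pow {d k : ℕ} [NeZero d] (hk : 1 ≤ k)
    (A : Matrix (Fin (d ^ k)) (Fin d) ℤ) (hA : ∀ i j, A i j = (i : ℤ) + 1) :
    gamma A = beta A ∧
    gamma A = (d : ℤ) + ∑ i ∈ Finset.range d, ∑ j ∈ Finset.Icc 1 k,
      (i : ℤ) * (d : ℤ) ^ (j - 1) := by
  set c : ℤ := (d : ℤ) + ∑ i ∈ Finset.range d, ∑ j ∈ Finset.Icc 1 k,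
      (i : ℤ) * (d : ℤ) ^ (j - 1) with hc
  -- reformulate c
  have hc' : c = (d : ℤ) + (∑ l ∈ Finset.range k, (∑ r ∈ Finset.range d, (r : ℤ)) * (d : ℤ) ^ l) := by
    rw [hc]
    congr 1
    rw [Finset.sum_comm]
    refine Finset.sum_nbij' (fun j => j - 1) (fun l => l + 1) ?_ ?_ ?_ ?_ ?_
    · intro a ha; simp only [Finset.mem_Icc] at ha; simp only [Finset.mem_range]; omega
    · intro a ha; simp only [Finset.mem_range] at ha; simp only [Finset.mem_Icc]; omega
    · intro a ha; simp only [Finset.mem_Icc] at ha; show a - 1 + 1 = a; omega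
    · intro a ha; simp only [Finset.mem_range] at ha; show a + 1 - 1 = a; omega
    · intro a _; rw [Finset.sum_mul]
  -- the explicit permutation
  let e : (Fin k → Fin d) ≃ Fin (d ^ k) := finFunctionFinEquiv
  let P0 : Fin d → Equiv.Perm (Fin (d ^ k)) := fun j =>
    (e.symm.trans (Equiv.piCongrRight fun _ : Fin k => Equiv.addRight j)).trans e
  have hP0 : ∀ i, rowSum (colPermute A P0) i = c := by
    intro i
    have hinv : ∀ j : Fin d, (P0 j)⁻¹ i = e (fun l => e.symm i l - j) := by
      intro j
      show (P0 j).symm i = _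
      simp only [P0, Equiv.symm_trans_apply, Equiv.symm_symm]
      congr 1
      funext l
      simp [Equiv.piCongrRight, sub_eq_add_neg]
    have step1 : rowSum (colPermute A P0) i
        = ∑ j : Fin d, ((((e (fun l => e.symm i l - j)) : Fin (d ^ k)) : ℤ) + 1) := by
      unfold rowSum colPermute
      refine Finset.sum_congr rfl fun j _ => ?_
      rw [hA, hinv]
    rw [step1, Finset.sum_add_distrib]
    have h2 : ∀ j : Fin d, (((e (fun l => e.symm i l - j)) : Fin (d ^ k)) : ℤ)
        = ∑ l : Fin k, ((e.symm i l - j : Fin d) : ℤ) * (d : ℤ) ^ (l : ℕ) := by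
      intro j
      have h : (((e (fun l => e.symm i l - j)) : Fin (d ^ k)) : ℕ)
          = ∑ l : Fin k, ((e.symm i l - j : Fin d) : ℕ) * d ^ (l : ℕ) :=
        finFunctionFinEquiv_apply (fun l => e.symm i l - j)
      exact_mod_cast h
    rw [Finset.sum_congr rfl fun j _ => h2 j, Finset.sum_comm]
    have h3 : ∀ l : Fin k, ∑ j : Fin d, ((e.symm i l - j : Fin d) : ℤ) * (d : ℤ) ^ (l : ℕ)
        = (∑ r ∈ Finset.range d, (r : ℤ)) * (d : ℤ) ^ (l : ℕ) := by
      intro l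
      rw [← Finset.sum_mul]
      congr 1
      calc ∑ j : Fin d, ((e.symm i l - j : Fin d) : ℤ) = ∑ r : Fin d, ((r : Fin d) : ℤ) :=
            Fintype.sum_equiv (Equiv.subLeft (e.symm i l)) _ _ (fun j => rfl)
        _ = ∑ r ∈ Finset.range d, (r : ℤ) := Fin.sum_univ_eq_sum_range (fun r => (r : ℤ)) d
    rw [Finset.sum_congr rfl fun l _ => h3 l, hc']
    rw [← Fin.sum_univ_eq_sum_range (fun l => (∑ r ∈ Finset.range d, (r : ℤ)) * (d : ℤ) ^ l) k]
    simp [add_comm]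
  -- total row sum is invariant
  have htot : ∀ P : Fin d → Equiv.Perm (Fin (d ^ k)),
      ∑ i, rowSum (colPermute A P) i = ((d ^ k : ℕ) : ℤ) * c := by
    intro P
    have hswap : ∀ Q : Fin d → Equiv.Perm (Fin (d ^ k)),
        ∑ i, rowSum (colPermute A Q) i = ∑ j : Fin d, ∑ i, A i j := by
      intro Q
      unfold rowSum colPermute
      rw [Finset.sum_comm]
      exact Finset.sum_congr rfl fun j _ => Equiv.sum_comp ((Q j)⁻¹) (fun i => A i j)
    rw [hswap P, ← hswap P0]
    rw [Finset.sum_congr rfl fun i _ => hP0 i]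
    simp [mul_comm]
  have hNpos : (0 : ℤ) < ((d ^ k : ℕ) : ℤ) := by
    have : 0 < d ^ k := pow_pos (Nat.pos_of_ne_zero (NeZero.ne d)) k
    exact_mod_cast this
  -- gamma ≤ c and beta ≥ c via P0
  have hsupP0 : (Finset.univ.sup' Finset.univ_nonempty
      fun i => rowSum (colPermute A P0) i) = c := by
    rw [show (fun i => rowSum (colPermute A P0) i) = fun _ => c from funext hP0]
    exact Finset.sup'_const _ _
  have hinfP0 : (Finset.univ.inf' Finset.univ_nonempty
      fun i => rowSum (colPermute A P0) i) = c := by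
    rw [show (fun i => rowSum (colPermute A P0) i) = fun _ => c from funext hP0]
    exact Finset.inf'_const _ _
  have hgle : gamma A ≤ c := by
    rw [← hsupP0]
    exact Finset.inf'_le _ (Finset.mem_univ P0)
  have hbge : c ≤ beta A := by
    rw [← hinfP0]
    exact Finset.le_sup' (f := fun P : Fin d → Equiv.Perm (Fin (d ^ k)) =>
      Finset.univ.inf' Finset.univ_nonempty fun i => rowSum (colPermute A P) i)
      (Finset.mem_univ P0)
  -- gamma ≥ c
  have hgge : c ≤ gamma A := by
    refine Finset.le_inf' _ _ fun P _ => ?_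
    set M := Finset.univ.sup' Finset.univ_nonempty fun i => rowSum (colPermute A P) i with hM
    have hle : ∀ i, rowSum (colPermute A P) i ≤ M :=
      fun i => Finset.le_sup' _ (Finset.mem_univ i)
    have : ((d ^ k : ℕ) : ℤ) * c ≤ ((d ^ k : ℕ) : ℤ) * M := by
      rw [← htot P]
      calc ∑ i, rowSum (colPermute A P) i ≤ ∑ _i : Fin (d ^ k), M :=
            Finset.sum_le_sum fun i _ => hle i
        _ = ((d ^ k : ℕ) : ℤ) * M := by simp [mul_comm]
    exact le_of_mul_le_mul_left this hNpos
  -- beta ≤ c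
  have hble : beta A ≤ c := by
    refine Finset.sup'_le _ _ fun P _ => ?_
    set m' := Finset.univ.inf' Finset.univ_nonempty fun i => rowSum (colPermute A P) i with hm
    have hle : ∀ i, m' ≤ rowSum (colPermute A P) i :=
      fun i => Finset.inf'_le _ (Finset.mem_univ i)
    have : ((d ^ k : ℕ) : ℤ) * m' ≤ ((d ^ k : ℕ) : ℤ) * c := by
      rw [← htot P]
      calc ((d ^ k : ℕ) : ℤ) * m' = ∑ _i : Fin (d ^ k), m' := by simp [mul_comm]
        _ ≤ ∑ i, rowSum (colPermute A P) i := Finset.sum_le_sum fun i _ => hle i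
    exact le_of_mul_le_mul_left this hNpos
  have hg : gamma A = c := le_antisymm hgle hgge
  have hb : beta A = c := le_antisymm hble hbge
  exact ⟨hg.trans hb.symm, hg⟩
end

section
/- Let N ≥ 1 and let A' ∈ ℤ^{N×3} be the matrix with A'_{i,1} = N+1−i and A'_{i,2} = A'_{i,3} = i for 1 ≤ i ≤ N. Then: (i) the row sums of A' are N+1+i for i = 1,…,N, i.e., they take exactly the values N+2, N+3, …, 2N+1; and (ii) for each column index j ∈ {1,2,3}, the column A'_{·j} is oppositely ordered to the vector of row sums of the matrix obtained from A' by deleting column j. -/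
/-- Two vectors `x, y` are oppositely ordered if some permutation `π` sorts `x`
increasingly and `y` decreasingly. -/
def OppositelyOrdered {n : ℕ} (x y : Fin n → ℤ) : Prop :=
  ∃ π : Equiv.Perm (Fin n), Monotone (fun t => x (π t)) ∧ Antitone (fun t => y (π t))

/-- Let `N ≥ 1` and `A' ∈ ℤ^{N×3}` with (0-based row index `i`)
`A'_{i,0} = N - i` and `A'_{i,1} = A'_{i,2} = i + 1`. Then (i) the row sums are
`N + 2 + i`, i.e. they take exactly the values `N+2, …, 2N+1`; and (ii) each column
is oppositely ordered to the vector of row sums of the matrix with that column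
deleted. -/
theorem swapping_algorithm_terminal_matrix {N : ℕ} [NeZero N]
    (A' : Matrix (Fin N) (Fin 3) ℤ)
    (h0 : ∀ i, A' i 0 = (N : ℤ) - i)
    (h1 : ∀ i, A' i 1 = (i : ℤ) + 1)
    (h2 : ∀ i, A' i 2 = (i : ℤ) + 1) :
    ((∀ i, ∑ j, A' i j = (N : ℤ) + 2 + i) ∧
      (∀ v : ℤ, (∃ i, ∑ j, A' i j = v) ↔ (N : ℤ) + 2 ≤ v ∧ v ≤ 2 * N + 1)) ∧
    (∀ j : Fin 3,
      OppositelyOrdered (fun i => ∑ l ∈ Finset.univ.erase j, A' i l)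
        (fun i => A' i j)) := by
  have hsum : ∀ i, ∑ j, A' i j = (N : ℤ) + 2 + i := by
    intro i
    rw [Fin.sum_univ_three, h0, h1, h2]; ring
  have herase : ∀ (j : Fin 3) (i : Fin N),
      ∑ l ∈ Finset.univ.erase j, A' i l = (N : ℤ) + 2 + i - A' i j := by
    intro j i
    rw [Finset.sum_erase_eq_sub (Finset.mem_univ j), hsum]
  have hN : 1 ≤ N := Nat.one_le_iff_ne_zero.mpr (NeZero.ne N)
  refine ⟨⟨hsum, ?_⟩, ?_⟩
  · intro v
    constructor
    · rintro ⟨i, hi⟩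
      rw [hsum] at hi
      have hlt : (i : ℕ) < N := i.isLt
      have hlt' : (i : ℤ) < N := by exact_mod_cast hlt
      have hpos : (0 : ℤ) ≤ (i : ℤ) := Int.natCast_nonneg _
      omega
    · rintro ⟨hle, hge⟩
      refine ⟨⟨(v - N - 2).toNat, by omega⟩, ?_⟩
      rw [hsum]
      have : (((⟨(v - N - 2).toNat, by omega⟩ : Fin N) : ℕ) : ℤ) = ((v - N - 2).toNat : ℤ) := rfl
      rw [this]
      omega
  · have hrev : ∀ t : Fin N, (((Fin.rev t : Fin N) : ℕ) : ℤ) = ((N - ((t:ℕ) + 1) : ℕ) : ℤ) := by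
      intro t; rw [Fin.val_rev]
    have c0 : OppositelyOrdered (fun i => ∑ l ∈ Finset.univ.erase (0 : Fin 3), A' i l)
        (fun i => A' i 0) := by
      refine ⟨Equiv.refl _, ?_, ?_⟩
      · intro a b hab
        have hab' : (a : ℤ) ≤ b := by exact_mod_cast hab
        simp only [herase, h0, Equiv.refl_apply]
        omega
      · intro a b hab
        have hab' : (a : ℤ) ≤ b := by exact_mod_cast hab
        simp only [h0, Equiv.refl_apply]
        omega
    have c1 : OppositelyOrdered (fun i => ∑ l ∈ Finset.univ.erase (1 : Fin 3), A' i l)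
        (fun i => A' i 1) := by
      refine ⟨Fin.revPerm, ?_, ?_⟩
      · intro a b hab
        simp only [herase, h1, Fin.revPerm_apply]
        omega
      · intro a b hab
        have hab' : (a : ℕ) ≤ b := hab
        have hbN : (b : ℕ) < N := b.isLt
        simp only [h1, Fin.revPerm_apply]
        rw [hrev a, hrev b]
        omega
    have c2 : OppositelyOrdered (fun i => ∑ l ∈ Finset.univ.erase (2 : Fin 3), A' i l)
        (fun i => A' i 2) := by
      refine ⟨Fin.revPerm, ?_, ?_⟩
      · intro a b hab
        simp only [herase, h2, Fin.revPerm_apply]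
        omega
      · intro a b hab
        have hab' : (a : ℕ) ≤ b := hab
        have hbN : (b : ℕ) < N := b.isLt
        simp only [h2, Fin.revPerm_apply]
        rw [hrev a, hrev b]
        omega
    intro j
    fin_cases j
    · exact c0
    · exact c1
    · exact c2
end
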